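/- Every single-coalition-first neighborhood model z-represents a single-coalition-first action model: given a single-coalition-first neighborhood model (suc, {nei_a : a ∈ AG}) with derived neighborhood functions nei_C, there exist a nonempty type Ac of actions and outcome functions out_a : S × JA_a → P(S) for each agent a such that (suc, {out_a : a ∈ AG}) is a single-coalition-first action model whose actual effectivity functions satisfy AE_C(s) = nei_C(s) for every coalition C and every state s. -/

import Mathlib

/-- `Δ` is a cover of `X` if `⋃ Δ = X` and `∅ ∉ Δ`. -/
def IsCover {S : Type} (Δ : Set (Set S)) (X : Set S) : Prop :=
  ⋃₀ Δ = X ∧ ∅ ∉ Δ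

/-- Restriction of a joint action of `C` to a subcoalition `D ⊆ C`. -/
def restr {AG Ac : Type} {C D : Set AG} (h : D ⊆ C) (σ : ↥C → Ac) : ↥D → Ac :=
  fun a => σ ⟨a.1, h a.2⟩

open Classical in
/-- The derived outcome function of a single-coalition-first action model. -/
noncomputable def sOut {AG S Ac : Type} (suc : S → Set S)
    (outa : (a : AG) → S → (↥({a} : Set AG) → Ac) → Set S)
    (C : Set AG) (s : S) (σ : ↥C → Ac) : Set S :=
  if C.Nonempty then
    ⋂ a : ↥C, outa a.1 s (restr (Set.singleton_subset_iff.mpr a.2) σ)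
  else suc s

open Classical in
/-- The derived neighborhood functions of a single-coalition-first
neighborhood model. -/
noncomputable def dNei {AG S : Type} (suc : S → Set S)
    (nei : AG → S → Set (Set S)) (C : Set AG) (s : S) : Set (Set S) :=
  if suc s = ∅ then ∅
  else if C = ∅ then {suc s}
  else {Y : Set S | Y.Nonempty ∧
    ∃ X : ↥C → Set S, (∀ a : ↥C, X a ∈ nei a.1 s) ∧ Y = ⋂ a : ↥C, X a}

/-!
Take the actions of every agent to be sets of states. At `s`, agent `a` playing `X` has
outcome `X` if `X ∈ nei_a(s)` and `∅` (so the action is unavailable) otherwise. Available joint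
actions of a nonempty coalition `C` then choose one neighborhood per member with nonempty
intersection, and their outcomes are exactly the members of `⨀ { nei_a(s) : a ∈ C }`; the
empty coalition contributes `suc(s)` whenever it is nonempty.
-/

/-- The actual effectivity function `AE_C(s)` of an action model. -/
def actualEff {AG S Ac : Type} (suc : S → Set S)
    (outa : (a : AG) → S → (↥({a} : Set AG) → Ac) → Set S) (C : Set AG) (s : S) :
    Set (Set S) :=
  {Y : Set S | ∃ σ : ↥C → Ac, Y = sOut suc outa C s σ ∧ Y ≠ ∅}

open Classical in
def neiOut {AG S : Type} (nei : AG → S → Set (Set S)) (a : AG) (s : S)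
    (σ : ↥({a} : Set AG) → Set S) : Set S :=
  if σ ⟨a, rfl⟩ ∈ nei a s then σ ⟨a, rfl⟩ else ∅

theorem IsCover.eq_empty {S : Type} {Δ : Set (Set S)} (h : IsCover Δ ∅) : Δ = ∅ := by
  refine Set.eq_empty_of_forall_notMem fun Y hY => h.2 ?_
  rwa [← Set.subset_empty_iff.1 (h.1 ▸ Set.subset_sUnion_of_mem hY)]

section neiOut

variable {AG S : Type} {nei : AG → S → Set (Set S)} {suc : S → Set S} {C : Set AG} {s : S}

theorem sUnion_neiOut (a : AG) (s : S) :
    ⋃₀ {Y : Set S | ∃ σ : ↥({a} : Set AG) → Set S, Y = neiOut nei a s σ} = ⋃₀ nei a s := by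
  apply subset_antisymm
  · rintro x ⟨_, ⟨σ, rfl⟩, hx⟩
    unfold neiOut at hx
    split_ifs at hx with hσ
    exacts [⟨_, hσ, hx⟩, hx.elim]
  · rintro x ⟨Y, hY, hx⟩
    exact ⟨Y, ⟨fun _ => Y, by simp [neiOut, hY]⟩, hx⟩

theorem sOut_neiOut (hC : C.Nonempty) (σ : ↥C → Set S) :
    sOut suc (neiOut nei) C s σ = ⋂ a : ↥C, neiOut nei a s (restr (by simp) σ) := by
  rw [sOut, if_pos hC]

theorem sOut_neiOut_of_forall_mem (hC : C.Nonempty) {σ : ↥C → Set S}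
    (hσ : ∀ a : ↥C, σ a ∈ nei a s) : sOut suc (neiOut nei) C s σ = ⋂ a : ↥C, σ a :=
  (sOut_neiOut hC σ).trans (Set.iInter_congr fun a => if_pos (hσ a))

theorem sOut_neiOut_of_notMem (hC : C.Nonempty) {σ : ↥C → Set S} (a : ↥C)
    (ha : σ a ∉ nei a s) : sOut suc (neiOut nei) C s σ = ∅ := by
  rw [sOut_neiOut hC, ← Set.subset_empty_iff]
  exact (Set.iInter_subset _ a).trans (if_neg ha).le

theorem actualEff_neiOut (hC : C.Nonempty) :
    actualEff suc (neiOut nei) C s = {Y : Set S | Y.Nonempty ∧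
      ∃ X : ↥C → Set S, (∀ a : ↥C, X a ∈ nei a.1 s) ∧ Y = ⋂ a : ↥C, X a} := by
  ext Y
  constructor
  · rintro ⟨σ, rfl, hY⟩
    have hσ : ∀ a : ↥C, σ a ∈ nei a s := fun a =>
      by_contra fun ha => hY (sOut_neiOut_of_notMem hC a ha)
    exact ⟨Set.nonempty_iff_ne_empty.2 hY, σ, hσ, sOut_neiOut_of_forall_mem hC hσ⟩
  · rintro ⟨hY, X, hX, rfl⟩
    exact ⟨X, (sOut_neiOut_of_forall_mem hC hX).symm, hY.ne_empty⟩

end neiOut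

theorem actualEff_emptyCoalition {AG S Ac : Type} (suc : S → Set S)
    (outa : (a : AG) → S → (↥({a} : Set AG) → Ac) → Set S) (s : S) :
    actualEff suc outa ∅ s = {Y : Set S | Y = suc s ∧ Y ≠ ∅} := by
  simp [actualEff, sOut]

theorem scf_nbhd_represents_scf_action_general
    {AG S : Type}
    (suc : S → Set S) (nei : AG → S → Set (Set S))
    (hnei : ∀ (a : AG) (s : S), IsCover (nei a s) (suc s)) :
    ∃ (Ac : Type) (_ : Nonempty Ac)
      (outa : (a : AG) → S → (↥({a} : Set AG) → Ac) → Set S),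
      (∀ (a : AG) (s : S),
        ⋃₀ {Y : Set S | ∃ σ : ↥({a} : Set AG) → Ac, Y = outa a s σ} = suc s) ∧
      (∀ (C : Set AG) (s : S),
        {Y : Set S | ∃ σ : ↥C → Ac, Y = sOut suc outa C s σ ∧ Y ≠ ∅} =
          dNei suc nei C s) := by
  refine ⟨Set S, ⟨∅⟩, neiOut nei, fun a s => (sUnion_neiOut a s).trans (hnei a s).1,
    fun C s => ?_⟩
  change actualEff suc (neiOut nei) C s = _
  rcases C.eq_empty_or_nonempty with rfl | hC
  · rw [actualEff_emptyCoalition, dNei, if_pos rfl]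
    split_ifs with hs
    · simp [hs]
    · ext Y
      simp only [Set.mem_ofPred_eq, Set.mem_singleton_iff, and_iff_left_iff_imp]
      rintro rfl
      exact hs
  · rw [actualEff_neiOut hC, dNei, if_neg hC.ne_empty]
    split_ifs with hs
    · obtain ⟨a, ha⟩ := hC
      refine Set.eq_empty_of_forall_notMem fun Y ⟨_, X, hX, _⟩ => ?_
      exact (hs ▸ hnei a s).eq_empty.subset (hX ⟨a, ha⟩)
    · rfl

/-- Every single-coalition-first neighborhood model z-represents a
single-coalition-first action model: there are a nonempty type of actions and
individual outcome functions forming a single-coalition-first action model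
(with the same successor function) whose actual effectivity functions
`AE_C(s) = { out_C(s,σ) : σ ∈ av_C(s) }` coincide with the derived
neighborhood functions. -/
theorem scf_nbhd_represents_scf_action
    {AG S : Type} [Fintype AG] [Nonempty AG] [Nonempty S]
    (suc : S → Set S) (nei : AG → S → Set (Set S))
    (hnei : ∀ (a : AG) (s : S), IsCover (nei a s) (suc s)) :
    ∃ (Ac : Type) (_ : Nonempty Ac)
      (outa : (a : AG) → S → (↥({a} : Set AG) → Ac) → Set S),
      (∀ (a : AG) (s : S),
        ⋃₀ {Y : Set S | ∃ σ : ↥({a} : Set AG) → Ac, Y = outa a s σ} = suc s) ∧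
      (∀ (C : Set AG) (s : S),
        {Y : Set S | ∃ σ : ↥C → Ac, Y = sOut suc outa C s σ ∧ Y ≠ ∅} =
          dNei suc nei C s) :=
  scf_nbhd_represents_scf_action_general suc nei hnei
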